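/- Let p be a positive integer. If p divides some Fibonacci number of odd index, i.e., there exists k ≥ 0 with p dividing F_{2k+1}, then −1 is a square modulo p: there exists an integer z such that p divides z² + 1. -/
import Mathlib

lemma fib_aux : ∀ n : ℕ, ((Nat.fib (n+1) : ℤ))^2 - (Nat.fib (n+1)) * (Nat.fib n) - (Nat.fib n)^2 = (-1)^n := by
  intro n
  induction n with
  | zero => simp
  | succ m ih =>
    have h : (Nat.fib (m+2) : ℤ) = Nat.fib m + Nat.fib (m+1) := by
      rw [Nat.fib_add_two]; push_cast; ring
    rw [h, pow_succ]
    linear_combination -ih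

/-- If a positive integer `p` divides some Fibonacci number of odd index, then `−1`
is a square modulo `p`. -/
theorem neg_one_square_of_divides_odd_fib (p : ℕ) (hp : 0 < p)
    (h : ∃ k : ℕ, p ∣ Nat.fib (2 * k + 1)) :
    ∃ z : ℤ, (p : ℤ) ∣ z ^ 2 + 1 := by
  obtain ⟨k, hk⟩ := h
  refine ⟨Nat.fib (2 * k), ?_⟩
  have h1 := fib_aux (2 * k)
  rw [pow_mul] at h1
  simp at h1
  have hdvd : (p : ℤ) ∣ (Nat.fib (2 * k + 1) : ℤ) := Int.natCast_dvd_natCast.mpr hk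
  have : ((Nat.fib (2*k) : ℤ))^2 + 1 = (Nat.fib (2*k+1)) * ((Nat.fib (2*k+1)) - Nat.fib (2*k)) := by
    nlinarith [h1]
  rw [this]
  exact hdvd.mul_right _
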